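/- Let G be a Tararin group with rational series {1} = G₀ ◁ ⋯ ◁ G_m = G, m ≥ 2. The conjugation action of G on LO(G) has exactly two orbits. Moreover, let γ_T be an element of G ∖ G_{m−1} which acts on G_{m−1}/G_{m−2} as multiplication by a negative number; then for any pair of left-orderings ⪯, ⪯′ of G there exists g ∈ G_{m−1} ∪ γ_T G_{m−1} such that the conjugate ordering g(⪯) coincides with ⪯′ on G_{m−1}. -/

import Mathlib

structure LeftOrder (G : Type*) [Group G] where
  lt : G → G → Prop
  irrefl : ∀ a, ¬ lt a a
  trans : ∀ a b c, lt a b → lt b c → lt a c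
  total : ∀ a b, lt a b ∨ a = b ∨ lt b a
  mul_left : ∀ a b c, lt a b → lt (c * a) (c * b)

namespace LeftOrder

variable {G : Type*} [Group G]

def le (o : LeftOrder G) (a b : G) : Prop := o.lt a b ∨ a = b

noncomputable def cone (o : LeftOrder G) : G → Bool :=
  fun g => @decide (o.lt 1 g) (Classical.propDecidable _)

noncomputable instance : TopologicalSpace (LeftOrder G) :=
  TopologicalSpace.induced cone inferInstance

def restrict (o : LeftOrder G) (H : Subgroup G) : LeftOrder H where
  lt a b := o.lt a b
  irrefl a := o.irrefl a
  trans a b c hab hbc := o.trans _ _ _ hab hbc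
  total a b := by
    rcases o.total (a : G) b with h | h | h
    · exact Or.inl h
    · exact Or.inr (Or.inl (Subtype.coe_injective h))
    · exact Or.inr (Or.inr h)
  mul_left a b c h := by
    simpa using o.mul_left (a : G) b c h

def conj (o : LeftOrder G) (g : G) : LeftOrder G where
  lt a b := o.lt (g * a * g⁻¹) (g * b * g⁻¹)
  irrefl a := o.irrefl _
  trans a b c hab hbc := o.trans _ _ _ hab hbc
  total a b := by
    rcases o.total (g * a * g⁻¹) (g * b * g⁻¹) with h | h | h
    · exact Or.inl h
    · exact Or.inr (Or.inl (mul_left_cancel (mul_right_cancel h)))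
    · exact Or.inr (Or.inr h)
  mul_left a b c h := by
    have key : ∀ x : G, g * (c * x) * g⁻¹ = (g * c * g⁻¹) * (g * x * g⁻¹) := by
      intro x; group
    show o.lt (g * (c * a) * g⁻¹) (g * (c * b) * g⁻¹)
    rw [key a, key b]
    exact o.mul_left _ _ _ h

def IsConvex (o : LeftOrder G) (H : Subgroup G) : Prop :=
  ∀ g h₁ h₂ : G, h₁ ∈ H → h₂ ∈ H → o.le h₁ g → o.le g h₂ → g ∈ H

def IsConradian (o : LeftOrder G) : Prop :=
  ∀ f g : G, o.lt 1 f → o.lt 1 g → o.lt g (f * (g * g))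

end LeftOrder

/-- A rational series of length `m` for `G`, together with identifications
`φ i` of the successive quotients `G_{i+1}/G_i` with subgroups of `ℚ`:
`{1} = s 0 ◁ s 1 ◁ ⋯ ◁ s m = G`, each `s i` normal in `G`, each quotient
nontrivial torsion-free abelian of rank one (it embeds in `ℚ` via `φ i`,
a homomorphism on `s (i+1)` with kernel exactly `s i`). -/
def IsRationalSeries {G : Type*} [Group G]
    (m : ℕ) (s : ℕ → Subgroup G) (φ : ℕ → G → ℚ) : Prop :=
  s 0 = ⊥ ∧ s m = ⊤ ∧
  (∀ i ≤ m, (s i).Normal) ∧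
  (∀ i < m, s i < s (i + 1)) ∧
  (∀ i < m, ∀ a ∈ s (i + 1), ∀ b ∈ s (i + 1), φ i (a * b) = φ i a + φ i b) ∧
  (∀ i < m, ∀ g ∈ s (i + 1), (φ i g = 0 ↔ g ∈ s i))

/-- A Tararin series: a rational series such that for every `2 ≤ i ≤ m` some
element of `G_i = s i` acts by conjugation on `G_{i-1}/G_{i-2}` as
multiplication by a negative rational number (in the indexing below,
`j + 1` plays the role of `i`, so `1 ≤ j ≤ m - 1`). -/
def IsTararinSeries {G : Type*} [Group G] (m : ℕ) (s : ℕ → Subgroup G) : Prop :=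
  ∃ φ : ℕ → G → ℚ, IsRationalSeries m s φ ∧
    ∀ j, 1 ≤ j → j < m →
      ∃ g ∈ s (j + 1), ∃ q : ℚ, q < 0 ∧
        ∀ h ∈ s j, φ (j - 1) (g * h * g⁻¹) = q * φ (j - 1) h

/-!
Fix a left order. All its positive elements of a level `s (i + 1) \ s i` have `φ i`-values of
one sign, because the level contains a positive element `t` above all of `s i`, and rank one
gives `f ^ k ∈ t ^ n * s i` with `k, n > 0` for every positive `f` of the level. At level `0`
any positive element will do as `t`; at level `i + 1` any positive element acting negatively on
level `i` will do. So the order is determined by its orientations on the levels, conjugation by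
`s (i + 1)` preserves the orientation on level `i`, and an element acting negatively on level
`i` flips it. Hence conjugation realises every pattern of orientations below the top level, and
the top orientation, which reversing the order flips, is the only invariant.
-/

namespace LeftOrder

variable {G : Type*} [Group G] (o : LeftOrder G)

theorem ext {o o' : LeftOrder G} (h : ∀ a b, o.lt a b ↔ o'.lt a b) : o = o' := by
  obtain ⟨lt, _⟩ := o
  obtain ⟨lt', _⟩ := o'
  obtain rfl : lt = lt' := funext₂ fun a b => propext (h a b)
  rfl

variable {o}

theorem lt_asymm {a b : G} (h : o.lt a b) : ¬ o.lt b a :=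
  fun h' => o.irrefl a (o.trans _ _ _ h h')

theorem not_lt_iff_lt {a b : G} (hab : a ≠ b) : ¬ o.lt a b ↔ o.lt b a := by
  refine ⟨fun h => ?_, fun h h' => lt_asymm h h'⟩
  rcases o.total a b with h' | h' | h'
  exacts [absurd h' h, absurd h' hab, h']

theorem mul_lt_mul_left_iff (c : G) {a b : G} : o.lt (c * a) (c * b) ↔ o.lt a b :=
  ⟨fun h => by simpa using o.mul_left _ _ c⁻¹ h, o.mul_left a b c⟩

theorem lt_iff_one_lt_inv_mul {a b : G} : o.lt a b ↔ o.lt 1 (a⁻¹ * b) := by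
  rw [← mul_lt_mul_left_iff a⁻¹, inv_mul_cancel]

theorem one_lt_inv_iff {a : G} : o.lt 1 a⁻¹ ↔ o.lt a 1 := by
  rw [← mul_lt_mul_left_iff a, mul_one, mul_inv_cancel]

theorem lt_mul_of_one_lt_right (a : G) {b : G} (hb : o.lt 1 b) : o.lt a (a * b) := by
  simpa using o.mul_left _ _ a hb

theorem one_lt_mul {a b : G} (ha : o.lt 1 a) (hb : o.lt 1 b) : o.lt 1 (a * b) :=
  o.trans _ _ _ ha (lt_mul_of_one_lt_right a hb)

theorem one_lt_or_one_lt_inv {a : G} (ha : a ≠ 1) : o.lt 1 a ∨ o.lt 1 a⁻¹ := by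
  rcases o.total 1 a with h | h | h
  · exact Or.inl h
  · exact absurd h.symm ha
  · exact Or.inr (one_lt_inv_iff.2 h)

theorem lt_pow_of_lt {x t : G} (ht : o.lt 1 t) (hx : o.lt x t) {n : ℕ} (hn : 0 < n) :
    o.lt x (t ^ n) := by
  induction n, hn using Nat.le_induction with
  | base => simpa using hx
  | succ n _ ih => exact o.trans _ _ _ ih (by simpa [pow_succ] using lt_mul_of_one_lt_right _ ht)

@[simp]
theorem conj_lt {g a b : G} : (o.conj g).lt a b ↔ o.lt (g * a * g⁻¹) (g * b * g⁻¹) := Iff.rfl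

variable (o)

@[simp]
theorem conj_one : o.conj 1 = o :=
  ext fun a b => by simp

theorem conj_conj (g g' : G) : (o.conj g).conj g' = o.conj (g * g') :=
  ext fun a b => by simp only [conj_lt, mul_inv_rev, mul_assoc]

def reverse : LeftOrder G where
  lt a b := o.lt b a
  irrefl := o.irrefl
  trans _ _ _ hab hbc := o.trans _ _ _ hbc hab
  total a b := by rcases o.total a b with h | h | h <;> tauto
  mul_left a b := o.mul_left b a

@[simp]
theorem reverse_lt {a b : G} : o.reverse.lt a b ↔ o.lt b a := Iff.rfl

end LeftOrder

theorem exists_nat_mul_eq_int_mul (α : ℚ) {β : ℚ} (hβ : β ≠ 0) :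
    ∃ (k : ℕ) (l : ℤ), 0 < k ∧ (k : ℚ) * α = l * β := by
  refine ⟨(α / β).den, (α / β).num, (α / β).pos, ?_⟩
  rw [← Rat.mul_den_eq_num]
  field_simp

section Levels

variable {G : Type*} [Group G]

def ActsNegativelyAt (s : ℕ → Subgroup G) (φ : ℕ → G → ℚ) (t : G) (i : ℕ) : Prop :=
  ∃ q : ℚ, q < 0 ∧ ∀ h ∈ s (i + 1), φ i (t * h * t⁻¹) = q * φ i h

def HasNegativeActions (m : ℕ) (s : ℕ → Subgroup G) (φ : ℕ → G → ℚ) : Prop :=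
  ∀ i, i + 1 < m → ∃ t ∈ s (i + 2), ActsNegativelyAt s φ t i

structure IsDominantAt (s : ℕ → Subgroup G) (φ : ℕ → G → ℚ) (o : LeftOrder G) (i : ℕ) (t : G) :
    Prop where
  mem : t ∈ s (i + 1)
  map_ne_zero : φ i t ≠ 0
  one_lt : o.lt 1 t
  lt_of_mem : ∀ x ∈ s i, o.lt x t

/-- The orientation of `o` on `s (i + 1) / s i ⊆ ℚ`. -/
def PositiveAt (s : ℕ → Subgroup G) (φ : ℕ → G → ℚ) (o : LeftOrder G) (i : ℕ) : Prop :=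
  ∃ f ∈ s (i + 1), 0 < φ i f ∧ o.lt 1 f

end Levels

namespace IsRationalSeries

variable {G : Type*} [Group G] {m : ℕ} {s : ℕ → Subgroup G} {φ : ℕ → G → ℚ} {i n : ℕ}
  {o o' : LeftOrder G} {a b f g t : G}
variable (hrs : IsRationalSeries m s φ)
include hrs

theorem mono {j : ℕ} (hij : i ≤ j) (hj : j ≤ m) : s i ≤ s j := by
  induction j, hij using Nat.le_induction with
  | base => exact le_rfl
  | succ j _ ih => exact (ih (by omega)).trans (hrs.2.2.2.1 j (by omega)).le

theorem map_mul (hi : i < m) (ha : a ∈ s (i + 1)) (hb : b ∈ s (i + 1)) :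
    φ i (a * b) = φ i a + φ i b :=
  hrs.2.2.2.2.1 i hi a ha b hb

theorem map_eq_zero_iff (hi : i < m) (ha : a ∈ s (i + 1)) : φ i a = 0 ↔ a ∈ s i :=
  hrs.2.2.2.2.2 i hi a ha

theorem map_inv (hi : i < m) (ha : a ∈ s (i + 1)) : φ i a⁻¹ = -φ i a := by
  have h := hrs.map_mul hi ha (inv_mem ha)
  rw [mul_inv_cancel, (hrs.map_eq_zero_iff hi (one_mem _)).2 (one_mem _)] at h
  linarith

theorem map_pow (hi : i < m) (ha : a ∈ s (i + 1)) (k : ℕ) : φ i (a ^ k) = k * φ i a := by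
  induction k with
  | zero => simpa using (hrs.map_eq_zero_iff hi (one_mem _)).2 (one_mem _)
  | succ k ih =>
    rw [pow_succ, hrs.map_mul hi (pow_mem ha k) ha, ih]
    push_cast
    ring

theorem map_zpow (hi : i < m) (ha : a ∈ s (i + 1)) (l : ℤ) : φ i (a ^ l) = l * φ i a := by
  rcases l with n | n
  · simpa using hrs.map_pow hi ha n
  · rw [zpow_negSucc, hrs.map_inv hi (pow_mem ha _), hrs.map_pow hi ha]
    push_cast
    ring

theorem conj_mem (hi : i ≤ m) (g : G) (ha : a ∈ s i) : g * a * g⁻¹ ∈ s i :=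
  (hrs.2.2.1 i hi).conj_mem a ha g

theorem map_conj (hi : i < m) (ha : a ∈ s (i + 1)) (hg : g ∈ s (i + 1)) :
    φ i (g * a * g⁻¹) = φ i a := by
  rw [hrs.map_mul hi (mul_mem hg ha) (inv_mem hg), hrs.map_mul hi hg ha, hrs.map_inv hi hg]
  ring

theorem exists_map_pos (hi : i < m) : ∃ a ∈ s (i + 1), 0 < φ i a := by
  obtain ⟨x, hx, hxi⟩ := SetLike.exists_of_lt (hrs.2.2.2.1 i hi)
  have hφx : φ i x ≠ 0 := mt (hrs.map_eq_zero_iff hi hx).1 hxi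
  rcases hφx.lt_or_gt with h | h
  · exact ⟨x⁻¹, inv_mem hx, by rw [hrs.map_inv hi hx]; linarith⟩
  · exact ⟨x, hx, h⟩

/-- Each quotient `s (i + 1) / s i` has rank one. -/
theorem exists_zpow_inv_mul_pow_mem (hi : i < m) (ha : a ∈ s (i + 1)) (hb : b ∈ s (i + 1))
    (hφb : φ i b ≠ 0) :
    ∃ (k : ℕ) (l : ℤ), 0 < k ∧ (k : ℚ) * φ i a = l * φ i b ∧ (b ^ l)⁻¹ * a ^ k ∈ s i := by
  obtain ⟨k, l, hk, hkl⟩ := exists_nat_mul_eq_int_mul (φ i a) hφb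
  refine ⟨k, l, hk, hkl, (hrs.map_eq_zero_iff hi ?_).1 ?_⟩
  · exact mul_mem (inv_mem (zpow_mem hb l)) (pow_mem ha k)
  · rw [hrs.map_mul hi (inv_mem (zpow_mem hb l)) (pow_mem ha k), hrs.map_inv hi (zpow_mem hb l),
      hrs.map_zpow hi hb, hrs.map_pow hi ha, hkl]
    ring

theorem notMem_of_actsNegativelyAt (hi : i < m) (ht : ActsNegativelyAt s φ t i) :
    t ∉ s (i + 1) := by
  obtain ⟨q, hq, hact⟩ := ht
  intro hts
  obtain ⟨a, ha, hφa⟩ := hrs.exists_map_pos hi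
  have := hact a ha
  rw [hrs.map_conj hi ha hts] at this
  nlinarith

theorem actsNegativelyAt_inv (hi : i < m) (ht : ActsNegativelyAt s φ t i) :
    ActsNegativelyAt s φ t⁻¹ i := by
  obtain ⟨q, hq, hact⟩ := ht
  refine ⟨q⁻¹, inv_lt_zero.2 hq, fun h hh => ?_⟩
  have := hact _ (hrs.conj_mem (by omega) t⁻¹ hh)
  rw [inv_inv, show t * (t⁻¹ * h * t) * t⁻¹ = h by group] at this
  rw [inv_inv, this, inv_mul_cancel_left₀ hq.ne]

theorem exists_one_lt_map_ne_zero (hi : i < m) (o : LeftOrder G) :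
    ∃ t ∈ s (i + 1), φ i t ≠ 0 ∧ o.lt 1 t := by
  obtain ⟨a, ha, hφa⟩ := hrs.exists_map_pos hi
  have hne : a ≠ 1 := by rintro rfl; simp [(hrs.map_eq_zero_iff hi (one_mem _)).2] at hφa
  rcases LeftOrder.one_lt_or_one_lt_inv hne with h | h
  · exact ⟨a, ha, hφa.ne', h⟩
  · exact ⟨a⁻¹, inv_mem ha, by rw [hrs.map_inv hi ha]; linarith, h⟩

theorem exists_pow_inv_mul_pow_mem (hi : i < m) (hD : IsDominantAt s φ o i t)
    (hf : f ∈ s (i + 1)) (hφf : φ i f ≠ 0) (hpf : o.lt 1 f) :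
    ∃ k n : ℕ, 0 < k ∧ 0 < n ∧ (k : ℚ) * φ i f = n * φ i t ∧ (t ^ n)⁻¹ * f ^ k ∈ s i := by
  obtain ⟨k, l, hk, hkl, hmem⟩ := hrs.exists_zpow_inv_mul_pow_mem hi hf hD.mem hD.map_ne_zero
  have hl : l ≠ 0 := by
    rintro rfl
    have hk' : (k : ℚ) ≠ 0 := by positivity
    exact hφf (by simpa [hk'] using hkl)
  rcases hl.lt_or_gt with hl | hl
  · exfalso
    obtain ⟨n, rfl⟩ : ∃ n : ℕ, l = -n := ⟨(-l).toNat, by omega⟩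
    rw [zpow_neg, inv_inv, zpow_natCast] at hmem
    have hn : 0 < n := by omega
    exact LeftOrder.lt_asymm (LeftOrder.lt_pow_of_lt hD.one_lt (hD.lt_of_mem _ hmem) hn)
      (LeftOrder.lt_mul_of_one_lt_right _ (LeftOrder.lt_pow_of_lt hpf hpf hk))
  · lift l to ℕ using hl.le
    exact ⟨k, l, hk, by exact_mod_cast hl, by exact_mod_cast hkl, by simpa using hmem⟩

theorem map_pos_iff_of_isDominantAt (hi : i < m) (hD : IsDominantAt s φ o i t)
    (hf : f ∈ s (i + 1)) (hφf : φ i f ≠ 0) (hpf : o.lt 1 f) : 0 < φ i f ↔ 0 < φ i t := by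
  obtain ⟨k, n, hk, hn, hkn, -⟩ := hrs.exists_pow_inv_mul_pow_mem hi hD hf hφf hpf
  have hk' : (0 : ℚ) < k := by exact_mod_cast hk
  have hn' : (0 : ℚ) < n := by exact_mod_cast hn
  constructor <;> intro h <;> nlinarith

theorem isDominantAt_succ (hi : i + 1 < m) {t₀ : G} (hD : IsDominantAt s φ o i t₀)
    (ht : t ∈ s (i + 2)) (hneg : ActsNegativelyAt s φ t i) (hpt : o.lt 1 t) :
    IsDominantAt s φ o (i + 1) t := by
  have hts : t ∉ s (i + 1) := hrs.notMem_of_actsNegativelyAt (by omega) hneg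
  have hlev : ∀ y ∈ s (i + 1), φ i y ≠ 0 → o.lt y t := by
    intro y hy hφy
    rcases o.total y t with h | rfl | h
    · exact h
    · exact absurd hy hts
    -- then `y` and `t⁻¹ * y * t` are positive elements of level `i` with `φ i`-values of
    -- opposite signs
    exfalso
    obtain ⟨q, hq, hact⟩ := hneg
    have h1 : o.lt 1 (t⁻¹ * y) := LeftOrder.lt_iff_one_lt_inv_mul.1 h
    have hz : t⁻¹ * y * t ∈ s (i + 1) := by simpa using hrs.conj_mem (by omega) t⁻¹ hy
    have hyz : φ i y = q * φ i (t⁻¹ * y * t) := by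
      simpa [mul_assoc] using hact _ hz
    have hφz : φ i (t⁻¹ * y * t) ≠ 0 := by rintro h0; simp [h0] at hyz; exact hφy hyz
    have hsign := (hrs.map_pos_iff_of_isDominantAt (by omega) hD hy hφy
      (by simpa using LeftOrder.one_lt_mul hpt h1)).trans
      (hrs.map_pos_iff_of_isDominantAt (by omega) hD hz hφz (LeftOrder.one_lt_mul h1 hpt)).symm
    rcases hφz.lt_or_gt with h' | h'
    · exact lt_asymm (hsign.1 (by nlinarith)) h'
    · exact lt_asymm (hsign.2 h') (by nlinarith)
  refine ⟨ht, mt (hrs.map_eq_zero_iff hi ht).1 hts, hpt, fun x hx => ?_⟩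
  by_cases hφx : φ i x = 0
  · exact o.trans _ _ _ (hD.lt_of_mem x ((hrs.map_eq_zero_iff (by omega) hx).1 hφx))
      (hlev t₀ hD.mem hD.map_ne_zero)
  · exact hlev x hx hφx

theorem exists_isDominantAt (hneg : HasNegativeActions m s φ) (o : LeftOrder G) :
    ∀ i < m, ∃ t, IsDominantAt s φ o i t
  | 0, h0 => by
    obtain ⟨t, ht, hφt, hpt⟩ := hrs.exists_one_lt_map_ne_zero h0 o
    refine ⟨t, ht, hφt, hpt, fun x hx => ?_⟩
    rw [hrs.1, Subgroup.mem_bot] at hx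
    rwa [hx]
  | i + 1, hi => by
    obtain ⟨t₀, hD⟩ := exists_isDominantAt hneg o i (by omega)
    obtain ⟨t, ht, hact⟩ := hneg i hi
    have hne : t ≠ 1 := by
      rintro rfl
      exact hrs.notMem_of_actsNegativelyAt (by omega) hact (one_mem _)
    rcases LeftOrder.one_lt_or_one_lt_inv (o := o) hne with h | h
    · exact ⟨t, hrs.isDominantAt_succ hi hD ht hact h⟩
    · exact ⟨t⁻¹, hrs.isDominantAt_succ hi hD (inv_mem ht)
        (hrs.actsNegativelyAt_inv (by omega) hact) h⟩

theorem positiveAt_iff_of_isDominantAt (hi : i < m) (hD : IsDominantAt s φ o i t) :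
    PositiveAt s φ o i ↔ 0 < φ i t :=
  ⟨fun ⟨_, hf, hφf, hpf⟩ => (hrs.map_pos_iff_of_isDominantAt hi hD hf hφf.ne' hpf).1 hφf,
    fun h => ⟨t, hD.mem, h, hD.one_lt⟩⟩

theorem one_lt_iff (hneg : HasNegativeActions m s φ) (hi : i < m) (hg : g ∈ s (i + 1))
    (hφg : φ i g ≠ 0) : o.lt 1 g ↔ (PositiveAt s φ o i ↔ 0 < φ i g) := by
  obtain ⟨t, hD⟩ := hrs.exists_isDominantAt hneg o i hi
  rw [hrs.positiveAt_iff_of_isDominantAt hi hD]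
  have hne : g ≠ 1 := by rintro rfl; exact hφg ((hrs.map_eq_zero_iff hi hg).2 (one_mem _))
  rcases LeftOrder.one_lt_or_one_lt_inv (o := o) hne with h | h
  · exact iff_of_true h (hrs.map_pos_iff_of_isDominantAt hi hD hg hφg h).symm
  · have h' := hrs.map_pos_iff_of_isDominantAt hi hD (inv_mem hg)
      (by rwa [hrs.map_inv hi hg, neg_ne_zero]) h
    rw [hrs.map_inv hi hg, neg_pos] at h'
    refine iff_of_false (LeftOrder.lt_asymm (LeftOrder.one_lt_inv_iff.1 h)) fun hiff => ?_
    rcases hφg.lt_or_gt with hlt | hgt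
    · exact hlt.not_gt (hiff.1 (h'.1 hlt))
    · exact hgt.not_gt (h'.2 (hiff.2 hgt))

theorem positiveAt_iff_one_lt (hneg : HasNegativeActions m s φ) (hi : i < m)
    (hg : g ∈ s (i + 1)) (hφg : 0 < φ i g) : PositiveAt s φ o i ↔ o.lt 1 g := by
  rw [hrs.one_lt_iff hneg hi hg hφg.ne']
  simp [hφg]

theorem positiveAt_conj (hi : i < m) (hg : g ∈ s (i + 1)) :
    PositiveAt s φ (o.conj g) i ↔ PositiveAt s φ o i := by
  constructor
  · rintro ⟨f, hf, hφf, hpf⟩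
    exact ⟨g * f * g⁻¹, hrs.conj_mem hi g hf, by rwa [hrs.map_conj hi hf hg], by simpa using hpf⟩
  · rintro ⟨f, hf, hφf, hpf⟩
    refine ⟨g⁻¹ * f * g, by simpa using hrs.conj_mem hi g⁻¹ hf, ?_, by simpa [mul_assoc] using hpf⟩
    rwa [show φ i (g⁻¹ * f * g) = φ i f by simpa using hrs.map_conj hi hf (inv_mem hg)]

theorem positiveAt_conj_of_actsNegativelyAt (hneg : HasNegativeActions m s φ) (hi : i < m)
    (ht : ActsNegativelyAt s φ t i) : PositiveAt s φ (o.conj t) i ↔ ¬ PositiveAt s φ o i := by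
  obtain ⟨a, ha, hφa⟩ := hrs.exists_map_pos hi
  obtain ⟨q, hq, hact⟩ := ht
  have hqa : ¬ 0 < q * φ i a := by nlinarith
  rw [hrs.positiveAt_iff_one_lt hneg hi ha hφa, LeftOrder.conj_lt, mul_one, mul_inv_cancel,
    hrs.one_lt_iff hneg hi (hrs.conj_mem hi t ha) (by rw [hact a ha]; nlinarith), hact a ha]
  simp only [hqa, iff_false]

theorem positiveAt_reverse (hneg : HasNegativeActions m s φ) (hi : i < m) :
    PositiveAt s φ o.reverse i ↔ ¬ PositiveAt s φ o i := by
  obtain ⟨a, ha, hφa⟩ := hrs.exists_map_pos hi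
  have hne : (1 : G) ≠ a := by
    rintro rfl; exact hφa.ne' ((hrs.map_eq_zero_iff hi ha).2 (one_mem _))
  rw [hrs.positiveAt_iff_one_lt hneg hi ha hφa, hrs.positiveAt_iff_one_lt hneg hi ha hφa,
    LeftOrder.reverse_lt, LeftOrder.not_lt_iff_lt hne]

theorem one_lt_iff_of_positiveAt_iff (hneg : HasNegativeActions m s φ) :
    ∀ {N : ℕ}, N ≤ m → (∀ i < N, PositiveAt s φ o i ↔ PositiveAt s φ o' i) →
      ∀ x ∈ s N, o.lt 1 x ↔ o'.lt 1 x
  | 0, _, _, x, hx => by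
    rw [hrs.1, Subgroup.mem_bot] at hx
    subst hx
    exact iff_of_false (o.irrefl 1) (o'.irrefl 1)
  | N + 1, hN, h, x, hx => by
    by_cases hφx : φ N x = 0
    · exact one_lt_iff_of_positiveAt_iff hneg (by omega) (fun i hi => h i (by omega)) x
        ((hrs.map_eq_zero_iff hN hx).1 hφx)
    · rw [hrs.one_lt_iff hneg hN hx hφx, hrs.one_lt_iff hneg hN hx hφx, h N N.lt_succ_self]

theorem lt_iff_of_positiveAt_iff (hneg : HasNegativeActions m s φ) {N : ℕ} (hN : N ≤ m)
    (h : ∀ i < N, PositiveAt s φ o i ↔ PositiveAt s φ o' i) {a b : G} (ha : a ∈ s N)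
    (hb : b ∈ s N) : o.lt a b ↔ o'.lt a b := by
  rw [LeftOrder.lt_iff_one_lt_inv_mul (o := o), LeftOrder.lt_iff_one_lt_inv_mul (o := o')]
  exact hrs.one_lt_iff_of_positiveAt_iff hneg hN h _ (mul_mem (inv_mem ha) hb)

theorem exists_conj_positiveAt_iff (hneg : HasNegativeActions m s φ) (hi : i < m)
    (ht : ActsNegativelyAt s φ t i) (o o' : LeftOrder G) :
    ∃ g, (g = 1 ∨ g = t) ∧ (PositiveAt s φ (o.conj g) i ↔ PositiveAt s φ o' i) := by
  by_cases h : PositiveAt s φ o i ↔ PositiveAt s φ o' i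
  · exact ⟨1, Or.inl rfl, by rwa [LeftOrder.conj_one]⟩
  · exact ⟨t, Or.inr rfl, by rw [hrs.positiveAt_conj_of_actsNegativelyAt hneg hi ht]; tauto⟩

theorem exists_mem_conj_positiveAt_iff (hneg : HasNegativeActions m s φ) :
    ∀ n < m, ∀ o o' : LeftOrder G,
      ∃ g ∈ s (n + 1), ∀ i < n, PositiveAt s φ (o.conj g) i ↔ PositiveAt s φ o' i
  | 0, _, _, _ => ⟨1, one_mem _, fun i hi => absurd hi i.not_lt_zero⟩
  | n + 1, hn, o, o' => by
    obtain ⟨t, ht, hact⟩ := hneg n hn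
    obtain ⟨g₀, hg₀, hpos⟩ := hrs.exists_conj_positiveAt_iff hneg (by omega) hact o o'
    obtain ⟨h, hh, hlow⟩ := exists_mem_conj_positiveAt_iff hneg n (by omega) (o.conj g₀) o'
    have hg₀s : g₀ ∈ s (n + 2) := by rcases hg₀ with rfl | rfl <;> simp [ht]
    refine ⟨g₀ * h, mul_mem hg₀s (hrs.mono (by omega) hn hh), fun i hi => ?_⟩
    rw [← LeftOrder.conj_conj]
    rcases Nat.lt_succ_iff_lt_or_eq.1 hi with hi | rfl
    · exact hlow i hi
    · exact (hrs.positiveAt_conj (by omega) hh).trans hpos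

theorem exists_mem_conj_lt_iff (hneg : HasNegativeActions m s φ) (hn : n < m)
    (h : PositiveAt s φ o n ↔ PositiveAt s φ o' n) :
    ∃ g ∈ s (n + 1), ∀ a b : G, a ∈ s (n + 1) → b ∈ s (n + 1) →
      ((o.conj g).lt a b ↔ o'.lt a b) := by
  obtain ⟨g, hg, hlow⟩ := hrs.exists_mem_conj_positiveAt_iff hneg n hn o o'
  refine ⟨g, hg, fun a b ha hb => hrs.lt_iff_of_positiveAt_iff hneg hn (fun i hi => ?_) ha hb⟩
  rcases Nat.lt_succ_iff_lt_or_eq.1 hi with hi | rfl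
  · exact hlow i hi
  · exact (hrs.positiveAt_conj hn hg).trans h

theorem exists_conj_lt_iff_of_actsNegativelyAt (hneg : HasNegativeActions m s φ) (hn : n < m)
    (ht : ActsNegativelyAt s φ t n) (o o' : LeftOrder G) :
    ∃ g : G, (g ∈ s (n + 1) ∨ ∃ h ∈ s (n + 1), g = t * h) ∧
      ∀ a b : G, a ∈ s (n + 1) → b ∈ s (n + 1) → ((o.conj g).lt a b ↔ o'.lt a b) := by
  obtain ⟨g₀, hg₀, hpos⟩ := hrs.exists_conj_positiveAt_iff hneg hn ht o o'
  obtain ⟨h, hh, hlt⟩ := hrs.exists_mem_conj_lt_iff hneg hn hpos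
  refine ⟨g₀ * h, ?_, by simpa only [LeftOrder.conj_conj] using hlt⟩
  rcases hg₀ with rfl | rfl
  · exact Or.inl (by simpa using hh)
  · exact Or.inr ⟨h, hh, rfl⟩

/-- The orientation on the top level is a conjugation invariant which the reverse order flips. -/
theorem conj_ne_reverse (hneg : HasNegativeActions m s φ) (hn : n + 1 = m) (o : LeftOrder G)
    (g : G) : o.conj g ≠ o.reverse := by
  intro heq
  have h := hrs.positiveAt_conj (o := o) (by omega) (show g ∈ s (n + 1) by simp [hn, hrs.2.1])
  rw [heq, hrs.positiveAt_reverse hneg (by omega)] at h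
  exact iff_not_self h.symm

theorem exists_eq_conj_or_exists_eq_reverse_conj (hneg : HasNegativeActions m s φ)
    (hn : n + 1 = m) (o o' : LeftOrder G) :
    (∃ g, o' = o.conj g) ∨ (∃ g, o' = o.reverse.conj g) := by
  have htop : ∀ a, a ∈ s (n + 1) := by simp [hn, hrs.2.1]
  have hconj : ∀ o₀, (PositiveAt s φ o₀ n ↔ PositiveAt s φ o' n) → ∃ g, o' = o₀.conj g := by
    intro o₀ h
    obtain ⟨g, -, hlt⟩ := hrs.exists_mem_conj_lt_iff hneg (by omega) h
    exact ⟨g, LeftOrder.ext fun a b => (hlt a b (htop a) (htop b)).symm⟩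
  by_cases h : PositiveAt s φ o n ↔ PositiveAt s φ o' n
  · exact Or.inl (hconj o h)
  · exact Or.inr (hconj _ (by rw [hrs.positiveAt_reverse hneg (by omega)]; tauto))

end IsRationalSeries

theorem tararin_group_two_orbits_general
    {G : Type*} [Group G]
    (hlo : Nonempty (LeftOrder G))
    (m : ℕ) (hm : 2 ≤ m) (s : ℕ → Subgroup G) (φ : ℕ → G → ℚ)
    (hrs : IsRationalSeries m s φ)
    (hneg : ∀ j, 1 ≤ j → j < m →
      ∃ g ∈ s (j + 1), ∃ q : ℚ, q < 0 ∧
        ∀ h ∈ s j, φ (j - 1) (g * h * g⁻¹) = q * φ (j - 1) h)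
    (γT : G)
    (hγTneg : ∃ q : ℚ, q < 0 ∧
      ∀ h ∈ s (m - 1), φ (m - 2) (γT * h * γT⁻¹) = q * φ (m - 2) h) :
    (∃ o₁ o₂ : LeftOrder G,
      (∀ g : G, o₁.conj g ≠ o₂) ∧
      (∀ o : LeftOrder G, (∃ g : G, o = o₁.conj g) ∨ (∃ g : G, o = o₂.conj g))) ∧
    (∀ o o' : LeftOrder G, ∃ g : G,
      (g ∈ s (m - 1) ∨ ∃ h ∈ s (m - 1), g = γT * h) ∧
      ∀ a b : G, a ∈ s (m - 1) → b ∈ s (m - 1) →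
        ((o.conj g).lt a b ↔ o'.lt a b)) := by
  obtain ⟨M, rfl⟩ : ∃ M, m = M + 2 := ⟨m - 2, by omega⟩
  have hneg' : HasNegativeActions (M + 2) s φ := fun i hi => by
    obtain ⟨t, ht, q, hq, hact⟩ := hneg (i + 1) (by omega) hi
    exact ⟨t, ht, q, hq, by simpa using hact⟩
  obtain ⟨o₀⟩ := hlo
  exact ⟨⟨o₀, o₀.reverse, hrs.conj_ne_reverse hneg' rfl o₀,
      hrs.exists_eq_conj_or_exists_eq_reverse_conj hneg' rfl o₀⟩,
    hrs.exists_conj_lt_iff_of_actsNegativelyAt hneg' (by omega : M < M + 2) hγTneg⟩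

/-- For a Tararin group `G` with rational series of length
`m ≥ 2`, the conjugation action of `G` on `LO(G)` has exactly two orbits;
moreover, if `γT ∈ G ∖ G_{m-1}` acts on `G_{m-1}/G_{m-2}` as multiplication by
a negative number, then for any two left-orderings `⪯, ⪯'` there is
`g ∈ G_{m-1} ∪ γT·G_{m-1}` such that `g(⪯)` coincides with `⪯'` on `G_{m-1}`. -/
theorem tararin_group_two_orbits
    {G : Type*} [Group G]
    (hlo : Nonempty (LeftOrder G))
    (m : ℕ) (hm : 2 ≤ m) (s : ℕ → Subgroup G) (φ : ℕ → G → ℚ)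
    (hrs : IsRationalSeries m s φ)
    (hneg : ∀ j, 1 ≤ j → j < m →
      ∃ g ∈ s (j + 1), ∃ q : ℚ, q < 0 ∧
        ∀ h ∈ s j, φ (j - 1) (g * h * g⁻¹) = q * φ (j - 1) h)
    (γT : G) (hγT : γT ∉ s (m - 1))
    (hγTneg : ∃ q : ℚ, q < 0 ∧
      ∀ h ∈ s (m - 1), φ (m - 2) (γT * h * γT⁻¹) = q * φ (m - 2) h) :
    (∃ o₁ o₂ : LeftOrder G,
      (∀ g : G, o₁.conj g ≠ o₂) ∧
      (∀ o : LeftOrder G, (∃ g : G, o = o₁.conj g) ∨ (∃ g : G, o = o₂.conj g))) ∧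
    (∀ o o' : LeftOrder G, ∃ g : G,
      (g ∈ s (m - 1) ∨ ∃ h ∈ s (m - 1), g = γT * h) ∧
      ∀ a b : G, a ∈ s (m - 1) → b ∈ s (m - 1) →
        ((o.conj g).lt a b ↔ o'.lt a b)) :=
  tararin_group_two_orbits_general hlo m hm s φ hrs hneg γT hγTneg
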